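/- arXiv:1909.09107 — 2 statements merged into one kernel-verified Lean document; each statement's English description precedes it below -/
import Mathlib

section
/- Suppose the Jacobi parameters (a_n), (b_n) are an N-periodic blend. Then for each i ∈ {1, 2, …, N−1}, lim_{j→∞} B_{j(N+2)+i}(x) = 𝔅_i(x) locally uniformly with respect to x ∈ ℝ; moreover lim_{j→∞} B_{(j+1)(N+2)}(x) · B_{j(N+2)+N+1}(x) · B_{j(N+2)+N}(x) = 𝒞(x) locally uniformly with respect to x ∈ ℝ, where 𝒞(x) is the 2×2 matrix with first row (0, −1) and second row (α_{N−1}/α_0, −(2x − β_0)/α_0). -/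
/-!
Write `T(y) = !![0, 1; -1, y]`. Every transfer matrix factors as
`B_n(x) = diag(1, 1/a_n) T(x - b_n) diag(a_{n-1}, 1)`, i.e. it is `blockMat 1 q w r x` with
parameters `q = a_{n-1}/a_n`, `w = b_n`, `r = 1/a_n`. Inside a period block these parameters
converge by asymptotic periodicity, and a family depending continuously on convergent parameters
converges locally uniformly. Across the two inserted sites `c = c̃_{2k}`, `c' = c̃_{2k+1}` the
parameters blow up, but after regrouping the diagonal factors the triple product is `L K R` with
`K = diag(c', 1/c') T(x) diag(c, 1/c) = !![0, c'/c; -c/c', x/(c c')]`, and `K → !![0, 1; -1, 0]`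
because `c'/c → 1` and `c c' → ∞`.
-/

open Filter Topology

attribute [local instance] Matrix.normedAddCommGroup

noncomputable section

abbrev Mat2 := Matrix (Fin 2) (Fin 2) ℝ

/-- The transfer matrix `B_n(x)` built from the Jacobi parameters `(a_n)`, `(b_n)`. -/
def Bmat (a b : ℕ → ℝ) (n : ℕ) (x : ℝ) : Mat2 :=
  !![0, 1; -(a (n - 1)) / a n, (x - b n) / a n]

/-- The transfer matrix `𝔅_j(x)` built from the periodic sequences `(α_n)`, `(β_n)`. -/
def frakB (α β : ℤ → ℝ) (j : ℤ) (x : ℝ) : Mat2 :=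
  !![0, 1; -(α (j - 1)) / α j, (x - β j) / α j]

theorem Continuous.tendstoLocallyUniformly_of_tendsto {ι P X Y : Type*} [TopologicalSpace P]
    [TopologicalSpace X] [WeaklyLocallyCompactSpace X] [UniformSpace Y] {F : P → X → Y}
    (hF : Continuous (Function.uncurry F)) {l : Filter ι} {p : ι → P} {p₀ : P}
    (hp : Tendsto p l (𝓝 p₀)) :
    TendstoLocallyUniformly (fun i => F (p i)) (F p₀) l :=
  ContinuousMap.tendsto_iff_tendstoLocallyUniformly.mp
    ((ContinuousMap.curry ⟨_, hF⟩).continuous.tendsto p₀ |>.comp hp)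

theorem TendstoLocallyUniformly.mul_of_continuous {ι X R : Type*} [TopologicalSpace X]
    [LocallyCompactSpace X] [UniformSpace R] [Mul R] [ContinuousMul R] {l : Filter ι}
    {F G : ι → X → R} {f g : X → R} (hF : TendstoLocallyUniformly F f l)
    (hG : TendstoLocallyUniformly G g l) (hFc : ∀ i, Continuous (F i))
    (hGc : ∀ i, Continuous (G i)) (hf : Continuous f) (hg : Continuous g) :
    TendstoLocallyUniformly (fun i x => F i x * G i x) (fun x => f x * g x) l := by
  let F' : ι → C(X, R) := fun i => ⟨F i, hFc i⟩
  let G' : ι → C(X, R) := fun i => ⟨G i, hGc i⟩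
  have hF' : Tendsto F' l (𝓝 ⟨f, hf⟩) := ContinuousMap.tendsto_iff_tendstoLocallyUniformly.mpr hF
  have hG' : Tendsto G' l (𝓝 ⟨g, hg⟩) := ContinuousMap.tendsto_iff_tendstoLocallyUniformly.mpr hG
  exact ContinuousMap.tendsto_iff_tendstoLocallyUniformly.mp (hF'.mul hG')

theorem Function.Periodic.tendsto_comp_mul_add {N : ℕ} {γ : ℤ → ℝ} (hγ : Function.Periodic γ N)
    {t : ℕ → ℝ} (ht : Tendsto (fun n : ℕ => |t n - γ n|) atTop (𝓝 0)) (hN : 0 < N) (i : ℕ) :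
    Tendsto (fun j : ℕ => t (j * N + i)) atTop (𝓝 (γ i)) := by
  have hidx : Tendsto (fun j : ℕ => j * N + i) atTop atTop :=
    tendsto_atTop_mono (fun j => (Nat.le_mul_of_pos_right j hN).trans (Nat.le_add_right _ _))
      tendsto_id
  have hγi : ∀ j : ℕ, γ ((j * N + i : ℕ) : ℤ) = γ i := fun j => by
    push_cast
    rw [add_comm]
    exact hγ.nat_mul j i
  rw [tendsto_iff_dist_tendsto_zero]
  simpa only [Function.comp_def, hγi, Real.dist_eq] using ht.comp hidx

def blockMat (p q w r x : ℝ) : Mat2 := !![0, p; -q, (x - w) * r]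

theorem continuous_blockMat (p q w r : ℝ) : Continuous (blockMat p q w r) := by
  unfold blockMat
  fun_prop

theorem tendstoLocallyUniformly_blockMat {ι : Type*} {l : Filter ι} {p q w r : ι → ℝ}
    {p₀ q₀ w₀ r₀ : ℝ} (hp : Tendsto p l (𝓝 p₀)) (hq : Tendsto q l (𝓝 q₀))
    (hw : Tendsto w l (𝓝 w₀)) (hr : Tendsto r l (𝓝 r₀)) :
    TendstoLocallyUniformly (fun i => blockMat (p i) (q i) (w i) (r i))
      (blockMat p₀ q₀ w₀ r₀) l :=
  Continuous.tendstoLocallyUniformly_of_tendsto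
    (F := fun (c : ℝ × ℝ × ℝ × ℝ) => blockMat c.1 c.2.1 c.2.2.1 c.2.2.2)
    (by unfold blockMat; fun_prop) (hp.prodMk_nhds (hq.prodMk_nhds (hw.prodMk_nhds hr)))

theorem Bmat_eq_blockMat (a b : ℕ → ℝ) (n : ℕ) (x : ℝ) :
    Bmat a b n x = blockMat 1 (a (n - 1) / a n) (b n) (a n)⁻¹ x := by
  simp only [Bmat, blockMat, div_eq_mul_inv, neg_mul]

theorem frakB_eq_blockMat (α β : ℤ → ℝ) (j : ℤ) (x : ℝ) :
    frakB α β j x = blockMat 1 (α (j - 1) / α j) (β j) (α j)⁻¹ x := by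
  simp only [frakB, blockMat, div_eq_mul_inv, neg_mul]

theorem blockMat_mul_blockMat_mul_blockMat (t w c₀ c₁ s x : ℝ) :
    blockMat 1 (c₁ / t) w t⁻¹ x * blockMat 1 (c₀ / c₁) 0 c₁⁻¹ x * blockMat 1 (s / c₀) 0 c₀⁻¹ x =
      blockMat 1 t⁻¹ w t⁻¹ x * blockMat (c₁ / c₀) (c₀ / c₁) 0 (c₀ * c₁)⁻¹ x *
        blockMat 1 s 0 1 x := by
  ext i j
  fin_cases i <;> fin_cases j <;> simp [blockMat] <;> ring

theorem blockMat_corner_limit (α₀ β₀ s x : ℝ) :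
    blockMat 1 α₀⁻¹ β₀ α₀⁻¹ x * blockMat 1 1 0 0 x * blockMat 1 s 0 1 x =
      !![0, -1; s / α₀, -(2 * x - β₀) / α₀] := by
  ext i j
  fin_cases i <;> fin_cases j <;> simp [blockMat] <;> ring

theorem tendstoLocallyUniformly_Bmat_of_blend {N : ℕ} {a b ta tb : ℕ → ℝ} {α β : ℤ → ℝ}
    (hαper : Function.Periodic α N) (hβper : Function.Periodic β N)
    (hasym_a : Tendsto (fun n : ℕ => |ta n - α n|) atTop (𝓝 0))
    (hasym_b : Tendsto (fun n : ℕ => |tb n - β n|) atTop (𝓝 0))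
    (hblend_a : ∀ k, ∀ i < N, a (k * (N + 2) + i) = ta (k * N + i))
    (hblend_b : ∀ k, ∀ i < N, b (k * (N + 2) + i) = tb (k * N + i))
    {i : ℕ} (hi : 1 ≤ i) (hiN : i < N) (hαi : α i ≠ 0) :
    TendstoLocallyUniformly (fun j => Bmat a b (j * (N + 2) + i)) (frakB α β i) atTop := by
  have hN : 0 < N := by omega
  have hB : ∀ j x, blockMat 1 (ta (j * N + (i - 1)) / ta (j * N + i)) (tb (j * N + i))
      (ta (j * N + i))⁻¹ x = Bmat a b (j * (N + 2) + i) x := by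
    intro j x
    rw [Bmat_eq_blockMat, show j * (N + 2) + i - 1 = j * (N + 2) + (i - 1) by omega,
      hblend_a j i hiN, hblend_a j (i - 1) (by omega), hblend_b j i hiN]
  have hfrakB : ∀ x, blockMat 1 (α (i - 1 : ℕ) / α i) (β i) (α i)⁻¹ x = frakB α β i x := by
    intro x
    rw [frakB_eq_blockMat, Nat.cast_sub hi, Nat.cast_one]
  have hta := hαper.tendsto_comp_mul_add hasym_a hN
  exact (tendstoLocallyUniformly_blockMat tendsto_const_nhds ((hta (i - 1)).div (hta i) hαi)
    (hβper.tendsto_comp_mul_add hasym_b hN i) ((hta i).inv₀ hαi)).congr hB |>.congr_right hfrakB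

theorem Bmat_mul_Bmat_mul_Bmat_of_blend {N : ℕ} (hN : 0 < N) {a b ta tb tc : ℕ → ℝ}
    (hblend_a : ∀ k, ∀ i < N, a (k * (N + 2) + i) = ta (k * N + i))
    (hblend_b : ∀ k, ∀ i < N, b (k * (N + 2) + i) = tb (k * N + i))
    (hblend_c : ∀ k, a (k * (N + 2) + N) = tc (2 * k) ∧
      a (k * (N + 2) + N + 1) = tc (2 * k + 1) ∧
      b (k * (N + 2) + N) = 0 ∧ b (k * (N + 2) + N + 1) = 0) (j : ℕ) (x : ℝ) :
    Bmat a b ((j + 1) * (N + 2)) x * Bmat a b (j * (N + 2) + N + 1) x *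
        Bmat a b (j * (N + 2) + N) x =
      blockMat 1 (ta (j * N + N))⁻¹ (tb (j * N + N)) (ta (j * N + N))⁻¹ x *
        blockMat (tc (2 * j + 1) / tc (2 * j)) (tc (2 * j) / tc (2 * j + 1)) 0
          (tc (2 * j) * tc (2 * j + 1))⁻¹ x *
        blockMat 1 (ta (j * N + (N - 1))) 0 1 x := by
  obtain ⟨ha₀, ha₁, hb₀, hb₁⟩ := hblend_c j
  have hnext : (j + 1) * (N + 2) = j * (N + 2) + N + 1 + 1 := by ring
  have hta : a ((j + 1) * (N + 2)) = ta (j * N + N) := by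
    simpa only [add_zero, add_one_mul] using hblend_a (j + 1) 0 hN
  have htb : b ((j + 1) * (N + 2)) = tb (j * N + N) := by
    simpa only [add_zero, add_one_mul] using hblend_b (j + 1) 0 hN
  rw [Bmat_eq_blockMat, Bmat_eq_blockMat, Bmat_eq_blockMat, hta, htb, hnext,
    add_tsub_cancel_right, add_tsub_cancel_right, Nat.add_sub_assoc hN,
    hblend_a j (N - 1) (by omega), ha₀, ha₁, hb₀, hb₁, blockMat_mul_blockMat_mul_blockMat]

theorem tendstoLocallyUniformly_blockMat_of_tendsto_ratio {c : ℕ → ℝ}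
    (hc : Tendsto c atTop atTop)
    (hratio : Tendsto (fun m : ℕ => c (2 * m + 1) / c (2 * m)) atTop (𝓝 1)) :
    TendstoLocallyUniformly
      (fun j => blockMat (c (2 * j + 1) / c (2 * j)) (c (2 * j) / c (2 * j + 1)) 0
        (c (2 * j) * c (2 * j + 1))⁻¹)
      (blockMat 1 1 0 0) atTop := by
  have hratio' : Tendsto (fun j => c (2 * j) / c (2 * j + 1)) atTop (𝓝 1) := by
    simpa only [inv_div, inv_one] using hratio.inv₀ one_ne_zero
  have h2 : Tendsto (fun j : ℕ => 2 * j) atTop atTop := tendsto_id.const_mul_atTop' two_pos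
  have hprod : Tendsto (fun j => (c (2 * j) * c (2 * j + 1))⁻¹) atTop (𝓝 0) :=
    ((hc.comp h2).atTop_mul_atTop₀ (hc.comp ((tendsto_add_atTop_nat 1).comp h2))).inv_tendsto_atTop
  exact tendstoLocallyUniformly_blockMat hratio hratio' tendsto_const_nhds hprod

theorem tendstoLocallyUniformly_Bmat_mul_Bmat_mul_Bmat_of_blend {N : ℕ} (hN : 0 < N)
    {a b ta tb tc : ℕ → ℝ} {α β : ℤ → ℝ}
    (hαper : Function.Periodic α N) (hβper : Function.Periodic β N)
    (hasym_a : Tendsto (fun n : ℕ => |ta n - α n|) atTop (𝓝 0))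
    (hasym_b : Tendsto (fun n : ℕ => |tb n - β n|) atTop (𝓝 0))
    (htc_div : Tendsto tc atTop atTop)
    (htc_ratio : Tendsto (fun m : ℕ => tc (2 * m + 1) / tc (2 * m)) atTop (𝓝 1))
    (hblend_a : ∀ k, ∀ i < N, a (k * (N + 2) + i) = ta (k * N + i))
    (hblend_b : ∀ k, ∀ i < N, b (k * (N + 2) + i) = tb (k * N + i))
    (hblend_c : ∀ k, a (k * (N + 2) + N) = tc (2 * k) ∧
      a (k * (N + 2) + N + 1) = tc (2 * k + 1) ∧
      b (k * (N + 2) + N) = 0 ∧ b (k * (N + 2) + N + 1) = 0) (hα₀ : α 0 ≠ 0) :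
    TendstoLocallyUniformly
      (fun (j : ℕ) (x : ℝ) =>
        Bmat a b ((j + 1) * (N + 2)) x * Bmat a b (j * (N + 2) + N + 1) x *
          Bmat a b (j * (N + 2) + N) x)
      (fun x : ℝ => !![0, -1; α ((N : ℤ) - 1) / α 0, -(2 * x - β 0) / α 0]) atTop := by
  have hta := hαper.tendsto_comp_mul_add hasym_a hN
  have ht : Tendsto (fun j => ta (j * N + N)) atTop (𝓝 (α 0)) := hαper.eq ▸ hta N
  have hw : Tendsto (fun j => tb (j * N + N)) atTop (𝓝 (β 0)) :=
    hβper.eq ▸ hβper.tendsto_comp_mul_add hasym_b hN N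
  have hs : Tendsto (fun j => ta (j * N + (N - 1))) atTop (𝓝 (α ((N : ℤ) - 1))) := by
    simpa only [Nat.cast_pred hN] using hta (N - 1)
  have hL : TendstoLocallyUniformly
      (fun j => blockMat 1 (ta (j * N + N))⁻¹ (tb (j * N + N)) (ta (j * N + N))⁻¹)
      (blockMat 1 (α 0)⁻¹ (β 0) (α 0)⁻¹) atTop :=
    tendstoLocallyUniformly_blockMat tendsto_const_nhds (ht.inv₀ hα₀) hw (ht.inv₀ hα₀)
  have hK := tendstoLocallyUniformly_blockMat_of_tendsto_ratio htc_div htc_ratio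
  have hR : TendstoLocallyUniformly (fun j => blockMat 1 (ta (j * N + (N - 1))) 0 1)
      (blockMat 1 (α ((N : ℤ) - 1)) 0 1) atTop :=
    tendstoLocallyUniformly_blockMat tendsto_const_nhds hs tendsto_const_nhds tendsto_const_nhds
  have hLK := hL.mul_of_continuous hK (fun _ => continuous_blockMat ..)
    (fun _ => continuous_blockMat ..) (continuous_blockMat ..) (continuous_blockMat ..)
  have hLKR := hLK.mul_of_continuous hR
    (fun _ => (continuous_blockMat ..).mul (continuous_blockMat ..))
    (fun _ => continuous_blockMat ..)
    ((continuous_blockMat ..).mul (continuous_blockMat ..)) (continuous_blockMat ..)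
  exact hLKR.congr (fun j x =>
      (Bmat_mul_Bmat_mul_Bmat_of_blend hN hblend_a hblend_b hblend_c j x).symm)
    |>.congr_right fun x => blockMat_corner_limit ..

theorem blocks_tendsto_of_periodic_blend_general
    (N : ℕ) (hN : 0 < N)
    (a b ta tb tc : ℕ → ℝ)
    (α β : ℤ → ℝ) (hα : ∀ n, 0 < α n)
    (hαper : ∀ n : ℤ, α (n + N) = α n) (hβper : ∀ n : ℤ, β (n + N) = β n)
    (hasym_a : Tendsto (fun n : ℕ => |ta n - α (n : ℤ)|) atTop (𝓝 0))
    (hasym_b : Tendsto (fun n : ℕ => |tb n - β (n : ℤ)|) atTop (𝓝 0))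
    (htc_div : Tendsto tc atTop atTop)
    (htc_ratio : Tendsto (fun m : ℕ => tc (2 * m + 1) / tc (2 * m)) atTop (𝓝 1))
    (hblend_a : ∀ k, ∀ i < N, a (k * (N + 2) + i) = ta (k * N + i))
    (hblend_b : ∀ k, ∀ i < N, b (k * (N + 2) + i) = tb (k * N + i))
    (hblend_c : ∀ k, a (k * (N + 2) + N) = tc (2 * k) ∧
      a (k * (N + 2) + N + 1) = tc (2 * k + 1) ∧
      b (k * (N + 2) + N) = 0 ∧ b (k * (N + 2) + N + 1) = 0) :
    (∀ i : ℕ, 1 ≤ i → i < N →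
      TendstoLocallyUniformly
        (fun (j : ℕ) (x : ℝ) => Bmat a b (j * (N + 2) + i) x)
        (fun x : ℝ => frakB α β (i : ℤ) x) atTop) ∧
    TendstoLocallyUniformly
      (fun (j : ℕ) (x : ℝ) =>
        Bmat a b ((j + 1) * (N + 2)) x * Bmat a b (j * (N + 2) + N + 1) x *
          Bmat a b (j * (N + 2) + N) x)
      (fun x : ℝ => !![0, -1; α ((N : ℤ) - 1) / α 0, -(2 * x - β 0) / α 0]) atTop :=
  ⟨fun _ hi hiN => tendstoLocallyUniformly_Bmat_of_blend hαper hβper hasym_a hasym_b hblend_a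
      hblend_b hi hiN (hα _).ne',
    tendstoLocallyUniformly_Bmat_mul_Bmat_mul_Bmat_of_blend hN hαper hβper hasym_a hasym_b
      htc_div htc_ratio hblend_a hblend_b hblend_c (hα 0).ne'⟩

/-- Proposition 7 of the paper. For an `N`-periodic blend:
`B_{j(N+2)+i}(x) → 𝔅_i(x)` for `i ∈ {1,…,N−1}` and
`B_{(j+1)(N+2)}(x)·B_{j(N+2)+N+1}(x)·B_{j(N+2)+N}(x) → 𝒞(x)`, locally uniformly on `ℝ`. -/
theorem blocks_tendsto_of_periodic_blend
    (N : ℕ) (hN : 0 < N)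
    (a b ta tb tc : ℕ → ℝ) (ha : ∀ n, 0 < a n) (hta : ∀ n, 0 < ta n) (htc : ∀ n, 0 < tc n)
    (α β : ℤ → ℝ) (hα : ∀ n, 0 < α n)
    (hαper : ∀ n : ℤ, α (n + N) = α n) (hβper : ∀ n : ℤ, β (n + N) = β n)
    (hasym_a : Tendsto (fun n : ℕ => |ta n - α (n : ℤ)|) atTop (𝓝 0))
    (hasym_b : Tendsto (fun n : ℕ => |tb n - β (n : ℤ)|) atTop (𝓝 0))
    (htc_div : Tendsto tc atTop atTop)
    (htc_ratio : Tendsto (fun m : ℕ => tc (2 * m + 1) / tc (2 * m)) atTop (𝓝 1))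
    (hblend_a : ∀ k, ∀ i < N, a (k * (N + 2) + i) = ta (k * N + i))
    (hblend_b : ∀ k, ∀ i < N, b (k * (N + 2) + i) = tb (k * N + i))
    (hblend_c : ∀ k, a (k * (N + 2) + N) = tc (2 * k) ∧
      a (k * (N + 2) + N + 1) = tc (2 * k + 1) ∧
      b (k * (N + 2) + N) = 0 ∧ b (k * (N + 2) + N + 1) = 0) :
    (∀ i : ℕ, 1 ≤ i → i < N →
      TendstoLocallyUniformly
        (fun (j : ℕ) (x : ℝ) => Bmat a b (j * (N + 2) + i) x)
        (fun x : ℝ => frakB α β (i : ℤ) x) atTop) ∧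
    TendstoLocallyUniformly
      (fun (j : ℕ) (x : ℝ) =>
        Bmat a b ((j + 1) * (N + 2)) x * Bmat a b (j * (N + 2) + N + 1) x *
          Bmat a b (j * (N + 2) + N) x)
      (fun x : ℝ => !![0, -1; α ((N : ℤ) - 1) / α 0, -(2 * x - β 0) / α 0]) atTop :=
  blocks_tendsto_of_periodic_blend_general N hN a b ta tb tc α β hα hαper hβper hasym_a hasym_b
    htc_div htc_ratio hblend_a hblend_b hblend_c
end
end

section
/- Let N ≥ 1 and let 𝒳_i (i ∈ {1, …, N}) be defined as below. Then for every x in Λ = {x ∈ ℝ : |tr 𝒳_1(x)| < 2}, ∑_{i=1}^{N−1} |[𝒳_i(x)]_{2,1}| / α_{i−1} + 2 |[𝒳_N(x)]_{2,1}| / α_{N−1} = |tr 𝒳_1′(x)|, where ′ denotes the derivative in x of the (polynomial) matrix entries and [M]_{2,1} denotes the (2,1) entry of a matrix M. -/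
/-!
Every `𝒳ᵢ` is a cyclic rotation of `𝒳₁ = 𝒞 𝔅_{N-1} ⋯ 𝔅₁`, so all of them have the trace of
`𝒳₁` and determinant `1`, and `𝒳ᵢ₊₁ 𝔅ᵢ = 𝔅ᵢ 𝒳ᵢ`. For an elliptic `2 × 2` matrix `M`
(`tr² < 4 det`) the binary form `v ↦ v ∧ M v` is definite with the sign of `M₂₁`, and the
intertwining relation gives `det 𝔅ᵢ · [𝒳ᵢ]₂₁ = b ∧ 𝒳ᵢ₊₁ b` for the first column `b` of `𝔅ᵢ`.
As `det 𝔅ᵢ = α_{i-1} / α_i > 0`, all the entries `[𝒳ᵢ]₂₁` (`calX … i x 1 0`) share one sign.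

On the other hand `x` enters `𝔅ⱼ` and `𝒞` affinely, with derivatives supported in the `(2,2)`
entry, so after rotating each term of the product rule under the trace,
`tr 𝒳₁' = -(∑ [𝒳ᵢ]₂₁ / α_{i-1} + 2 [𝒳_N]₂₁ / α_{N-1})`, and the absolute values come out.
-/

open Filter Topology

noncomputable section

/-- Product in decreasing index order with integer starting point:
`prodDZ C n0 len = C (n0+len-1) ⋯ C n0`. -/
def prodDZ (C : ℤ → Mat2) (n0 : ℤ) : ℕ → Mat2
  | 0 => 1
  | (len + 1) => C (n0 + len) * prodDZ C n0 len

/-- The matrix `𝒞(x)`. -/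
def Cmat (α β : ℤ → ℝ) (N : ℕ) (x : ℝ) : Mat2 :=
  !![0, -1; α ((N : ℤ) - 1) / α 0, -(2 * x - β 0) / α 0]

/-- `𝒳_i(x) = (∏_{j=1}^{i−1} 𝔅_j(x)) · 𝒞(x) · (∏_{j=i}^{N−1} 𝔅_j(x))`. -/
def calX (α β : ℤ → ℝ) (N i : ℕ) (x : ℝ) : Mat2 :=
  prodDZ (fun j => frakB α β j x) 1 (i - 1) * Cmat α β N x *
    prodDZ (fun j => frakB α β j x) (i : ℤ) (N - i)


open Finset
open scoped Matrix.Norms.Operator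

section OrderedField

variable {K : Type*} [Field K] [LinearOrder K] [IsStrictOrderedRing K]

theorem sign_binaryForm_of_discrim_neg {p q r : K} (h : discrim p q r < 0) {u v : K}
    (huv : u ≠ 0 ∨ v ≠ 0) :
    SignType.sign (p * u ^ 2 + q * u * v + r * v ^ 2) = SignType.sign p := by
  unfold discrim at h
  -- `4 p (p u² + q u v + r v²) = (2 p u + q v)² - (q² - 4 p r) v²`
  have hpos : 0 < p * (p * u ^ 2 + q * u * v + r * v ^ 2) := by
    rcases eq_or_ne v 0 with rfl | hv
    · have hp : p ≠ 0 := by rintro rfl; nlinarith [sq_nonneg q]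
      have hu : u ≠ 0 := by simpa using huv
      have : 0 < p ^ 2 * u ^ 2 := by positivity
      linear_combination this
    · nlinarith [sq_nonneg (2 * p * u + q * v), mul_pos (neg_pos.2 h) (sq_pos_of_ne_zero hv)]
  rcases pos_and_pos_or_neg_and_neg_of_mul_pos hpos with ⟨hp, hQ⟩ | ⟨hp, hQ⟩
  · rw [sign_pos hp, sign_pos hQ]
  · rw [sign_neg hp, sign_neg hQ]

theorem abs_sign_of_ne_zero {a : K} (ha : a ≠ 0) : |(SignType.sign a : K)| = 1 := by
  rcases ha.lt_or_gt with h | h <;> simp [h, sign_neg, sign_pos]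

end OrderedField

namespace Matrix

theorem discrim_fin_two {R : Type*} [CommRing R] (M : Matrix (Fin 2) (Fin 2) R) :
    discrim (M 1 0) (M 1 1 - M 0 0) (-M 0 1) = M.trace ^ 2 - 4 * M.det := by
  rw [discrim, trace_fin_two, det_fin_two]
  ring

/-- Both sides are `b ∧ M' b` for the first column `b` of `B`,
since `M' b = B (M e₀) = M 0 0 • b + M 1 0 • B e₁`. -/
theorem det_mul_apply_one_zero_of_mul_eq_mul {R : Type*} [CommRing R]
    {M M' B : Matrix (Fin 2) (Fin 2) R} (h : M' * B = B * M) :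
    B.det * M 1 0 =
      M' 1 0 * B 0 0 ^ 2 + (M' 1 1 - M' 0 0) * B 0 0 * B 1 0 + -M' 0 1 * B 1 0 ^ 2 := by
  have h00 := congrFun (congrFun h 0) 0
  have h10 := congrFun (congrFun h 1) 0
  simp only [mul_apply, Fin.sum_univ_two] at h00 h10
  rw [det_fin_two]
  linear_combination B 1 0 * h00 - B 0 0 * h10

variable {K : Type*} [Field K] [LinearOrder K] [IsStrictOrderedRing K]

theorem apply_one_zero_ne_zero_of_sq_trace_lt {M : Matrix (Fin 2) (Fin 2) K}
    (hM : M.trace ^ 2 < 4 * M.det) : M 1 0 ≠ 0 := by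
  intro h
  rw [trace_fin_two, det_fin_two, h] at hM
  nlinarith [sq_nonneg (M 0 0 - M 1 1)]

theorem sign_apply_one_zero_eq_of_mul_eq_mul {M M' B : Matrix (Fin 2) (Fin 2) K}
    (h : M' * B = B * M) (hB : 0 < B.det) (hM' : M'.trace ^ 2 < 4 * M'.det) :
    SignType.sign (M' 1 0) = SignType.sign (M 1 0) := by
  have hcol : B 0 0 ≠ 0 ∨ B 1 0 ≠ 0 := by
    by_contra! hB0
    simp [det_fin_two, hB0] at hB
  have hdiscr : discrim (M' 1 0) (M' 1 1 - M' 0 0) (-M' 0 1) < 0 := by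
    rw [discrim_fin_two]
    linarith
  rw [← sign_binaryForm_of_discrim_neg hdiscr hcol, ← det_mul_apply_one_zero_of_mul_eq_mul h,
    sign_mul, sign_pos hB, one_mul]

end Matrix

theorem HasDerivAt.matrix_trace {m : Type*} [Fintype m] {F : ℝ → Matrix m m ℝ}
    {F' : Matrix m m ℝ} {x : ℝ} (h : HasDerivAt F F' x) :
    HasDerivAt (fun y => (F y).trace) F'.trace x :=
  (Matrix.traceLinearMap m ℝ ℝ).toContinuousLinearMap.hasFDerivAt.comp_hasDerivAt x h

theorem hasDerivAt_const_add_smul {E : Type*} [NormedAddCommGroup E] [NormedSpace ℝ E]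
    (a b : E) (x : ℝ) : HasDerivAt (fun y => a + y • b) b x :=
  (((hasDerivAt_id' x).smul_const b).const_add a).congr_deriv (one_smul ℝ b)

theorem prodDZ_add (C : ℤ → Mat2) (n0 : ℤ) (a b : ℕ) :
    prodDZ C n0 (a + b) = prodDZ C (n0 + a) b * prodDZ C n0 a := by
  induction b with
  | zero => simp [prodDZ]
  | succ b ih =>
    rw [← add_assoc, prodDZ, ih, prodDZ, mul_assoc]
    congr 2
    push_cast
    ring

theorem prodDZ_succ' (C : ℤ → Mat2) (n0 : ℤ) (len : ℕ) :
    prodDZ C n0 (len + 1) = prodDZ C (n0 + 1) len * C n0 := by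
  rw [add_comm, prodDZ_add]
  simp [prodDZ]

theorem hasDerivAt_prodDZ {A : ℤ → ℝ → Mat2} {A' : ℤ → Mat2} {x : ℝ}
    (hA : ∀ j, HasDerivAt (A j) (A' j) x) (n0 : ℤ) (len : ℕ) :
    HasDerivAt (fun y => prodDZ (A · y) n0 len)
      (∑ k ∈ range len,
        prodDZ (A · x) (n0 + k + 1) (len - 1 - k) * A' (n0 + k) * prodDZ (A · x) n0 k) x := by
  induction len with
  | zero =>
    simp only [prodDZ, range_zero, sum_empty]
    exact hasDerivAt_const x 1
  | succ m ih =>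
    refine ((hA (n0 + m)).fun_mul ih).congr_deriv ?_
    rw [sum_range_succ, add_comm, mul_sum]
    congr 1
    · refine sum_congr rfl fun k hk => ?_
      have hk : k < m := mem_range.mp hk
      rw [show m + 1 - 1 - k = (m - 1 - k) + 1 by omega, prodDZ,
        show n0 + k + 1 + ((m - 1 - k : ℕ) : ℤ) = n0 + m by omega]
      simp only [mul_assoc]
    · simp [prodDZ]

section Transfer

variable (α β : ℤ → ℝ)

def frakBDeriv (j : ℤ) : Mat2 := !![0, 0; 0, (α j)⁻¹]

def CmatDeriv : Mat2 := !![0, 0; 0, -2 / α 0]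

theorem hasDerivAt_frakB (j : ℤ) (x : ℝ) : HasDerivAt (frakB α β j) (frakBDeriv α j) x := by
  have hB : frakB α β j = fun y => frakB α β j 0 + y • frakBDeriv α j := by
    ext y a b
    fin_cases a <;> fin_cases b <;> simp [frakB, frakBDeriv]
    ring
  rw [hB]
  exact hasDerivAt_const_add_smul _ _ x

theorem hasDerivAt_Cmat (N : ℕ) (x : ℝ) : HasDerivAt (Cmat α β N) (CmatDeriv α) x := by
  have hC : Cmat α β N = fun y => Cmat α β N 0 + y • CmatDeriv α := by
    ext y a b
    fin_cases a <;> fin_cases b <;> simp [Cmat, CmatDeriv]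
    ring
  rw [hC]
  exact hasDerivAt_const_add_smul _ _ x

theorem det_frakB (j : ℤ) (x : ℝ) : (frakB α β j x).det = α (j - 1) / α j := by
  simp [frakB, Matrix.det_fin_two_of]
  ring

theorem det_prodDZ_frakB (hα : ∀ n, α n ≠ 0) (x : ℝ) (n0 : ℤ) (len : ℕ) :
    (prodDZ (frakB α β · x) n0 len).det = α (n0 - 1) / α (n0 + len - 1) := by
  induction len with
  | zero => simp [prodDZ, div_self (hα _)]
  | succ m ih =>
    rw [prodDZ, Matrix.det_mul, det_frakB, ih, show n0 + (m + 1 : ℕ) - 1 = n0 + m by push_cast; ring]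
    field_simp [hα (n0 + m - 1)]

theorem trace_mul_frakBDeriv (G : Mat2) (j : ℤ) (x : ℝ) (hα : α (j - 1) ≠ 0) :
    (G * frakBDeriv α j).trace = -(G * frakB α β j x) 1 0 / α (j - 1) := by
  simp [Matrix.trace_fin_two, Matrix.mul_apply, frakB, frakBDeriv]
  field_simp

theorem trace_mul_CmatDeriv (G : Mat2) (N : ℕ) (x : ℝ) (hα : α (N - 1) ≠ 0) :
    (G * CmatDeriv α).trace = -2 * (G * Cmat α β N x) 1 0 / α (N - 1) := by
  simp [Matrix.trace_fin_two, Matrix.mul_apply, Cmat, CmatDeriv]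
  field_simp

variable {N : ℕ} (x : ℝ)

theorem calX_succ_of_add_eq {i k : ℕ} (h : i + 1 + k = N) :
    calX α β N (i + 1) x =
      prodDZ (frakB α β · x) 1 i * Cmat α β N x * prodDZ (frakB α β · x) (i + 1) k := by
  rw [calX, Nat.add_sub_cancel, show N - (i + 1) = k by omega, Nat.cast_succ]

theorem calX_one_of_add_eq {k : ℕ} (h : 1 + k = N) :
    calX α β N 1 x = Cmat α β N x * prodDZ (frakB α β · x) 1 k := by
  rw [calX_succ_of_add_eq α β x (i := 0) (by omega)]
  simp [prodDZ]

theorem calX_succ_eq_rotate {i k : ℕ} (h : i + 1 + k = N) :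
    calX α β N (i + 1) x = prodDZ (frakB α β · x) 1 i *
        (Cmat α β N x * prodDZ (frakB α β · x) (i + 1) k) ∧
      calX α β N 1 x = (Cmat α β N x * prodDZ (frakB α β · x) (i + 1) k) *
        prodDZ (frakB α β · x) 1 i := by
  refine ⟨by rw [calX_succ_of_add_eq α β x h, mul_assoc], ?_⟩
  rw [calX_one_of_add_eq α β x (k := i + k) (by omega), prodDZ_add, mul_assoc, add_comm (1 : ℤ)]

theorem trace_calX_succ {i : ℕ} (h : i + 1 ≤ N) :
    (calX α β N (i + 1) x).trace = (calX α β N 1 x).trace := by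
  obtain ⟨hi, h1⟩ := calX_succ_eq_rotate α β x (Nat.add_sub_of_le h)
  rw [hi, h1, Matrix.trace_mul_comm]

theorem det_calX_succ {i : ℕ} (h : i + 1 ≤ N) :
    (calX α β N (i + 1) x).det = (calX α β N 1 x).det := by
  obtain ⟨hi, h1⟩ := calX_succ_eq_rotate α β x (Nat.add_sub_of_le h)
  rw [hi, h1, Matrix.det_mul_comm]

theorem det_calX_one (hα : ∀ n, α n ≠ 0) (hN : 1 ≤ N) : (calX α β N 1 x).det = 1 := by
  rw [calX_one_of_add_eq α β x (Nat.add_sub_of_le hN), Matrix.det_mul, det_prodDZ_frakB α β hα]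
  simp [Cmat, Matrix.det_fin_two_of, Nat.cast_sub hN]
  field_simp [hα 0, hα (N - 1)]

theorem calX_mul_frakB {i : ℕ} (h : i + 2 ≤ N) :
    calX α β N (i + 2) x * frakB α β (i + 1) x = frakB α β (i + 1) x * calX α β N (i + 1) x := by
  obtain ⟨k, rfl⟩ := Nat.exists_eq_add_of_le h
  rw [calX_succ_of_add_eq α β x (i := i + 1) (k := k) (by omega),
    calX_succ_of_add_eq α β x (i := i) (k := k + 1) (by omega), prodDZ_succ' _ _ k, prodDZ]
  push_cast
  simp only [mul_assoc, add_comm (1 : ℤ) (i : ℤ)]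

theorem sign_calX_apply_one_zero (hα : ∀ n, 0 < α n)
    (hX : (calX α β N 1 x).trace ^ 2 < 4 * (calX α β N 1 x).det) :
    ∀ i, i + 1 ≤ N → SignType.sign (calX α β N (i + 1) x 1 0) =
      SignType.sign (calX α β N 1 x 1 0) := by
  intro i
  induction i with
  | zero => exact fun _ => rfl
  | succ i ih =>
    intro h
    rw [← ih (by omega)]
    refine Matrix.sign_apply_one_zero_eq_of_mul_eq_mul (calX_mul_frakB α β x h) ?_ ?_
    · rw [det_frakB, add_sub_cancel_right]
      exact div_pos (hα _) (hα _)
    · rwa [trace_calX_succ α β x h, det_calX_succ α β x h]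

theorem trace_Cmat_mul_derivTerm (hα : ∀ n, α n ≠ 0) {k : ℕ} (hk : k + 1 < N) :
    (Cmat α β N x * (prodDZ (frakB α β · x) (1 + k + 1) (N - 1 - 1 - k) * frakBDeriv α (1 + k) *
      prodDZ (frakB α β · x) 1 k)).trace = -(calX α β N (k + 1) x 1 0 / α k) := by
  rw [← mul_assoc, ← mul_assoc, Matrix.trace_mul_comm]
  simp only [← mul_assoc]
  rw [trace_mul_frakBDeriv α β _ _ x (by simpa using hα k),
    calX_succ_of_add_eq α β x (k := N - 1 - 1 - k + 1) (by omega), prodDZ_succ']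
  simp only [mul_assoc, add_comm (1 : ℤ), add_sub_cancel_right, neg_div]

theorem hasDerivAt_trace_calX_one (hα : ∀ n, α n ≠ 0) (hN : 1 ≤ N) :
    HasDerivAt (fun y => (calX α β N 1 y).trace)
      (-((∑ i ∈ Ico 1 N, calX α β N i x 1 0 / α (i - 1)) +
        2 * calX α β N N x 1 0 / α (N - 1))) x := by
  have hX : (fun y => (calX α β N 1 y).trace) =
      fun y => (Cmat α β N y * prodDZ (frakB α β · y) 1 (N - 1)).trace :=
    funext fun y => congrArg Matrix.trace (calX_one_of_add_eq α β y (Nat.add_sub_of_le hN))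
  have hXN : calX α β N N x = prodDZ (frakB α β · x) 1 (N - 1) * Cmat α β N x := by
    have h := calX_succ_of_add_eq α β x (N := N) (i := N - 1) (k := 0) (by omega)
    rw [Nat.sub_add_cancel hN] at h
    simp [h, prodDZ]
  rw [hX]
  convert (((hasDerivAt_Cmat α β N x).fun_mul
    (hasDerivAt_prodDZ (hasDerivAt_frakB α β · x) 1 (N - 1))).matrix_trace) using 1
  rw [Matrix.trace_add, Matrix.trace_mul_comm, trace_mul_CmatDeriv α β _ N x (hα _), ← hXN,
    Matrix.mul_sum, Matrix.trace_sum, sum_Ico_eq_sum_range]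
  rw [sum_congr rfl fun k hk =>
    trace_Cmat_mul_derivTerm α β x hα (k := k) (by rw [mem_range] at hk; omega)]
  simp [add_comm 1]
  ring

theorem sum_abs_calX_apply_one_zero (hα : ∀ n, 0 < α n) (hN : 1 ≤ N)
    (hX : (calX α β N 1 x).trace ^ 2 < 4 * (calX α β N 1 x).det) :
    (∑ i ∈ Ico 1 N, |calX α β N i x 1 0| / α (i - 1)) + 2 * |calX α β N N x 1 0| / α (N - 1) =
      SignType.sign (calX α β N 1 x 1 0) *
        ((∑ i ∈ Ico 1 N, calX α β N i x 1 0 / α (i - 1)) + 2 * calX α β N N x 1 0 / α (N - 1)) := by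
  have habs : ∀ i, 1 ≤ i → i ≤ N →
      |calX α β N i x 1 0| = SignType.sign (calX α β N 1 x 1 0) * calX α β N i x 1 0 := by
    intro i h1 h2
    obtain ⟨i, rfl⟩ := Nat.exists_eq_add_of_le' h1
    rw [← sign_mul_self, sign_calX_apply_one_zero α β x hα hX i h2]
  rw [mul_add, mul_sum, habs N hN le_rfl]
  congr 1
  · refine sum_congr rfl fun i hi => ?_
    rw [mem_Ico] at hi
    rw [habs i hi.1 hi.2.le, mul_div_assoc]
  · ring

end Transfer

theorem blend_entry_sum_eq_trace_deriv_general
    (N : ℕ) (hN : 1 ≤ N)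
    (α β : ℤ → ℝ) (hα : ∀ n, 0 < α n) :
    ∀ x : ℝ, |Matrix.trace (calX α β N 1 x)| < 2 →
      (∑ i ∈ Finset.Ico 1 N, |calX α β N i x 1 0| / α ((i : ℤ) - 1)) +
          2 * |calX α β N N x 1 0| / α ((N : ℤ) - 1) =
        |deriv (fun y => Matrix.trace (calX α β N 1 y)) x| := by
  intro x hx
  have hα0 : ∀ n, α n ≠ 0 := fun n => (hα n).ne'
  have helliptic : (calX α β N 1 x).trace ^ 2 < 4 * (calX α β N 1 x).det := by
    rw [det_calX_one α β x hα0 hN, ← sq_abs]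
    nlinarith [abs_nonneg (calX α β N 1 x).trace]
  have hnonneg : 0 ≤ (∑ i ∈ Ico 1 N, |calX α β N i x 1 0| / α (i - 1)) +
      2 * |calX α β N N x 1 0| / α (N - 1) :=
    add_nonneg (sum_nonneg fun i _ => div_nonneg (abs_nonneg _) (hα _).le)
      (div_nonneg (by positivity) (hα _).le)
  rw [(hasDerivAt_trace_calX_one α β x hα0 hN).deriv, abs_neg, ← abs_of_nonneg hnonneg,
    sum_abs_calX_apply_one_zero α β x hα hN helliptic, abs_mul,
    abs_sign_of_ne_zero (Matrix.apply_one_zero_ne_zero_of_sq_trace_lt helliptic), one_mul]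

/-- Corollary 6 of the paper. For `x` with `|tr 𝒳_1(x)| < 2`,
`∑_{i=1}^{N−1} |[𝒳_i(x)]_{2,1}|/α_{i−1} + 2|[𝒳_N(x)]_{2,1}|/α_{N−1} = |tr 𝒳_1'(x)|`. -/
theorem blend_entry_sum_eq_trace_deriv
    (N : ℕ) (hN : 1 ≤ N)
    (α β : ℤ → ℝ) (hα : ∀ n, 0 < α n)
    (hαper : ∀ n : ℤ, α (n + N) = α n) (hβper : ∀ n : ℤ, β (n + N) = β n) :
    ∀ x : ℝ, |Matrix.trace (calX α β N 1 x)| < 2 →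
      (∑ i ∈ Finset.Ico 1 N, |calX α β N i x 1 0| / α ((i : ℤ) - 1)) +
          2 * |calX α β N N x 1 0| / α ((N : ℤ) - 1) =
        |deriv (fun y => Matrix.trace (calX α β N 1 y)) x| :=
  blend_entry_sum_eq_trace_deriv_general N hN α β hα
end
end
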